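/- arXiv:1507.01981 — 8 statements merged into one kernel-verified Lean document; each statement's English description precedes it below -/
import Mathlib

section
/- For any ordered instance I (windows W[1..n] sorted so that non-null windows appear with both start and end points nondecreasing) and any solution S for I, the sequence obtained by sorting S (permuting the allocated slots into nondecreasing order) is an ordered solution for I. -/
/-- Ordering theorem, part (1).  An instance has `n` unit tasks with windows
    `W i = [(W i).1, (W i).2]`; a solution assigns each task a unit slot
    `[S i, S i + 1] ⊆ W i` with pairwise non-overlapping slots (for unit
    slots, interiors disjoint means `S i + 1 ≤ S j ∨ S j + 1 ≤ S i`).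
    If the instance is ordered (windows nondecreasing in the product order on
    endpoints), then any rearrangement of a solution `S` into nondecreasing
    order (given by a permutation `σ` with `S ∘ σ` monotone) is an ordered
    solution for the instance. -/
theorem ordering_sorted_solution (n : ℕ) (W : Fin n → ℝ × ℝ)
    (hWlen : ∀ i, (W i).1 + 1 ≤ (W i).2)
    (hWord : ∀ i j : Fin n, i ≤ j → (W i).1 ≤ (W j).1 ∧ (W i).2 ≤ (W j).2)
    (S : Fin n → ℝ)
    (hmem : ∀ i, (W i).1 ≤ S i ∧ S i + 1 ≤ (W i).2)
    (hdisj : ∀ i j, i ≠ j → S i + 1 ≤ S j ∨ S j + 1 ≤ S i)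
    (σ : Equiv.Perm (Fin n)) (hmono : Monotone (S ∘ σ)) :
    (∀ i, (W i).1 ≤ S (σ i) ∧ S (σ i) + 1 ≤ (W i).2) ∧
    (∀ i j, i ≠ j → S (σ i) + 1 ≤ S (σ j) ∨ S (σ j) + 1 ≤ S (σ i)) ∧
    Monotone (fun i => S (σ i)) := by
  have key1 : ∀ i : Fin n, ∃ k, k ≤ i ∧ i ≤ σ k := by
    intro i
    by_contra h
    push_neg at h
    have hcard : (Finset.Iic i).card ≤ (Finset.Iio i).card := by
      apply Finset.card_le_card_of_injOn σ
      · intro k hk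
        simp only [Finset.mem_coe, Finset.mem_Iic] at hk
        simpa [Finset.mem_Iio] using h k hk
      · exact fun a _ b _ hab => σ.injective hab
    rw [Fin.card_Iic, Fin.card_Iio] at hcard
    omega
  have key2 : ∀ i : Fin n, ∃ k, i ≤ k ∧ σ k ≤ i := by
    intro i
    by_contra h
    push_neg at h
    have hcard : (Finset.Ici i).card ≤ (Finset.Ioi i).card := by
      apply Finset.card_le_card_of_injOn σ
      · intro k hk
        simp only [Finset.mem_coe, Finset.mem_Ici] at hk
        simpa [Finset.mem_Ioi] using h k hk
      · exact fun a _ b _ hab => σ.injective hab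
    rw [Fin.card_Ici, Fin.card_Ioi] at hcard
    have := i.isLt
    omega
  refine ⟨?_, ?_, ?_⟩
  · intro i
    constructor
    · obtain ⟨k, hk, hσk⟩ := key1 i
      calc (W i).1 ≤ (W (σ k)).1 := (hWord i (σ k) hσk).1
        _ ≤ S (σ k) := (hmem (σ k)).1
        _ ≤ S (σ i) := hmono hk
    · obtain ⟨k, hk, hσk⟩ := key2 i
      have h1 : S (σ i) ≤ S (σ k) := hmono hk
      calc S (σ i) + 1 ≤ S (σ k) + 1 := by linarith
        _ ≤ (W (σ k)).2 := (hmem (σ k)).2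
        _ ≤ (W i).2 := (hWord (σ k) i hσk).2
  · intro i j hij
    exact hdisj (σ i) (σ j) (fun h => hij (σ.injective h))
  · exact hmono
end

section
/- Let (I, S, r) be an ordered insert state: I = (n, T, W) is an ordered instance of unit tasks, S is a partial solution allocating all tasks except task r. Define istart = max over i in [1..r] of (W[i].start − i + r) and iend = min over i in [r..n] of (W[i].end − i + r). Then for any unit slot s: s ⊆ [istart, iend] if and only if there exists an ordered solution Y for I with Y[r] = s. -/
lemma sep_pack (m : ℕ) : ∀ (F : Finset ℕ) (f : ℕ → ℝ) (L : ℝ), F.card = m + 1 →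
    (∀ k ∈ F, L ≤ f k) →
    (∀ i ∈ F, ∀ j ∈ F, i ≠ j → f i + 1 ≤ f j ∨ f j + 1 ≤ f i) →
    ∃ k ∈ F, L + m ≤ f k := by
  induction m with
  | zero =>
    intro F f L hcard hL _
    obtain ⟨k, hk⟩ := Finset.card_eq_one.1 hcard
    refine ⟨k, by simp [hk], ?_⟩
    have := hL k (by simp [hk])
    simpa using this
  | succ m ih =>
    intro F f L hcard hL hsep
    have hne : F.Nonempty := Finset.card_pos.1 (by omega)
    obtain ⟨k0, hk0, hmax⟩ := F.exists_max_image f hne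
    have hcard' : (F.erase k0).card = m + 1 := by
      rw [Finset.card_erase_of_mem hk0, hcard]; omega
    obtain ⟨k, hk, hle⟩ := ih (F.erase k0) f L hcard'
      (fun k hk => hL k (Finset.mem_of_mem_erase hk))
      (fun i hi j hj hij => hsep i (Finset.mem_of_mem_erase hi) j (Finset.mem_of_mem_erase hj) hij)
    have hkF : k ∈ F := Finset.mem_of_mem_erase hk
    have hne' : k ≠ k0 := Finset.ne_of_mem_erase hk
    refine ⟨k0, hk0, ?_⟩
    rcases hsep k hkF k0 hk0 hne' with h | h
    · push_cast
      linarith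
    · have := hmax k hkF
      linarith

/-- Insertion Range lemma.  `(I, S, r)` is an ordered insert state: windows
    `W 1, …, W n` nondecreasing in both endpoints, and `S` a partial solution
    allocating every task except task `r` to a unit slot `[S i, S i + 1]`
    inside its window, pairwise non-overlapping.  With
    `istart = max_{1 ≤ i ≤ r} ((W i).start - i + r)` and
    `iend = min_{r ≤ i ≤ n} ((W i).end - i + r)`,
    a unit slot `[s, s+1]` satisfies `[s, s+1] ⊆ [istart, iend]` iff there is
    an ordered solution `Y` for `I` with `Y r = s`.  (An ordered solution of
    unit slots satisfies `Y i + 1 ≤ Y j` for `i < j`.) -/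
theorem insertion_range (n r : ℕ) (hr1 : 1 ≤ r) (hrn : r ≤ n)
    (W : ℕ → ℝ × ℝ)
    (hWlen : ∀ i ∈ Finset.Icc 1 n, (W i).1 + 1 ≤ (W i).2)
    (hWord : ∀ i j, 1 ≤ i → i ≤ j → j ≤ n →
      (W i).1 ≤ (W j).1 ∧ (W i).2 ≤ (W j).2)
    (S : ℕ → ℝ)
    (hSmem : ∀ i ∈ Finset.Icc 1 n, i ≠ r → (W i).1 ≤ S i ∧ S i + 1 ≤ (W i).2)
    (hSdisj : ∀ i j, 1 ≤ i → i < j → j ≤ n → i ≠ r → j ≠ r →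
      S i + 1 ≤ S j ∨ S j + 1 ≤ S i)
    (istart iend : ℝ)
    (histart : istart = (Finset.Icc 1 r).sup'
      (Finset.nonempty_Icc.2 hr1) (fun i => (W i).1 - (i : ℝ) + (r : ℝ)))
    (hiend : iend = (Finset.Icc r n).inf'
      (Finset.nonempty_Icc.2 hrn) (fun i => (W i).2 - (i : ℝ) + (r : ℝ)))
    (s : ℝ) :
    (istart ≤ s ∧ s + 1 ≤ iend) ↔
    (∃ Y : ℕ → ℝ, Y r = s ∧
      (∀ i ∈ Finset.Icc 1 n, (W i).1 ≤ Y i ∧ Y i + 1 ≤ (W i).2) ∧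
      (∀ i j, 1 ≤ i → i < j → j ≤ n → Y i + 1 ≤ Y j)) := by
  constructor
  · rintro ⟨hs1, hs2⟩
    -- gap lemma from the partial solution S
    have gap : ∀ a b : ℕ, 1 ≤ a → a ≤ b → b ≤ n → (∀ k, a ≤ k → k ≤ b → k ≠ r) →
        (W a).1 + ((b - a : ℕ) : ℝ) + 1 ≤ (W b).2 := by
      intro a b ha hab hbn hnr
      have hcard : (Finset.Icc a b).card = (b - a) + 1 := by
        rw [Nat.card_Icc]; omega
      obtain ⟨k, hk, hle⟩ := sep_pack (b - a) (Finset.Icc a b) S (W a).1 hcard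
        (fun k hk => by
          rw [Finset.mem_Icc] at hk
          have h1 := (hWord a k ha hk.1 (le_trans hk.2 hbn)).1
          have h2 := (hSmem k (Finset.mem_Icc.2 ⟨le_trans ha hk.1, le_trans hk.2 hbn⟩)
            (hnr k hk.1 hk.2)).1
          linarith)
        (fun i hi j hj hij => by
          rw [Finset.mem_Icc] at hi hj
          rcases lt_or_gt_of_ne hij with h | h
          · exact hSdisj i j (le_trans ha hi.1) h (le_trans hj.2 hbn)
              (hnr i hi.1 hi.2) (hnr j hj.1 hj.2)
          · exact (hSdisj j i (le_trans ha hj.1) h (le_trans hi.2 hbn)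
              (hnr j hj.1 hj.2) (hnr i hi.1 hi.2)).symm)
      rw [Finset.mem_Icc] at hk
      have h3 := (hSmem k (Finset.mem_Icc.2 ⟨le_trans ha hk.1, le_trans hk.2 hbn⟩)
        (hnr k hk.1 hk.2)).2
      have h4 := (hWord k b (le_trans ha hk.1) hk.2 hbn).2
      linarith
    set g : ℕ → ℝ := fun j => if j < r then (W j).2 - 1 else if j = r then s else (W j).1 with hg
    set Y : ℕ → ℝ := fun i =>
      if h : i ≤ r then (Finset.Icc i r).inf' (Finset.nonempty_Icc.2 h)
        (fun j => g j + (i : ℝ) - (j : ℝ))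
      else (Finset.Icc r i).sup' (Finset.nonempty_Icc.2 (not_le.1 h).le)
        (fun j => g j + (i : ℝ) - (j : ℝ)) with hY
    have hgr : g r = s := by simp [hg]
    have hYinf : ∀ i (h : i ≤ r), Y i = (Finset.Icc i r).inf' (Finset.nonempty_Icc.2 h)
        (fun j => g j + (i : ℝ) - (j : ℝ)) := by
      intro i h; simp [hY, dif_pos h]
    have hYr : Y r = s := by
      rw [hYinf r le_rfl]
      simp [Finset.Icc_self, hgr]
    have hYsup : ∀ i (h : r ≤ i), Y i = (Finset.Icc r i).sup' (Finset.nonempty_Icc.2 h)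
        (fun j => g j + (i : ℝ) - (j : ℝ)) := by
      intro i h
      rcases eq_or_lt_of_le h with h' | h'
      · subst h'
        rw [hYr]
        simp [Finset.Icc_self, hgr]
      · simp [hY, dif_neg (not_le.2 h')]
    -- istart / iend unfolded
    have histart' : ∀ i, 1 ≤ i → i ≤ r → (W i).1 - (i : ℝ) + (r : ℝ) ≤ s := by
      intro i h1 h2
      have h := Finset.le_sup' (fun i => (W i).1 - (i : ℝ) + (r : ℝ))
        (Finset.mem_Icc.2 ⟨h1, h2⟩)
      rw [← histart] at h
      exact le_trans h hs1
    have hiend' : ∀ i, r ≤ i → i ≤ n → s + 1 ≤ (W i).2 - (i : ℝ) + (r : ℝ) := by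
      intro i h1 h2
      have h := Finset.inf'_le (fun i => (W i).2 - (i : ℝ) + (r : ℝ))
        (Finset.mem_Icc.2 ⟨h1, h2⟩)
      rw [← hiend] at h
      exact le_trans hs2 h
    -- consecutive step
    have hstep : ∀ i, Y i + 1 ≤ Y (i + 1) := by
      intro i
      by_cases h : i + 1 ≤ r
      · have hi : i ≤ r := by omega
        rw [hYinf i hi, hYinf (i+1) h]
        apply Finset.le_inf'
        intro j hj
        rw [Finset.mem_Icc] at hj
        have hj' : j ∈ Finset.Icc i r := Finset.mem_Icc.2 ⟨by omega, hj.2⟩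
        have := Finset.inf'_le (fun j => g j + (i : ℝ) - (j : ℝ)) hj'
        push_cast
        linarith
      · have hi : r ≤ i := by omega
        rw [hYsup i hi, hYsup (i+1) (by omega)]
        rw [← le_sub_iff_add_le]
        apply Finset.sup'_le
        intro j hj
        rw [Finset.mem_Icc] at hj
        have hj' : j ∈ Finset.Icc r (i+1) := Finset.mem_Icc.2 ⟨hj.1, by omega⟩
        have := Finset.le_sup' (fun j => g j + ((i + 1 : ℕ) : ℝ) - (j : ℝ)) hj'
        push_cast at this ⊢
        linarith
    -- general ordering
    have hord : ∀ i j : ℕ, i < j → Y i + 1 ≤ Y j := by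
      intro i j hij
      induction j with
      | zero => omega
      | succ j ihj =>
        rcases Nat.lt_succ_iff_lt_or_eq.1 hij with h | h
        · have := ihj h
          have := hstep j
          linarith
        · subst h; exact hstep i
    refine ⟨Y, hYr, ?_, fun i j _ hij _ => hord i j hij⟩
    intro i hi
    rw [Finset.mem_Icc] at hi
    by_cases hir : i ≤ r
    · rw [hYinf i hir]
      constructor
      · -- lower bound
        apply Finset.le_inf'
        intro j hj
        rw [Finset.mem_Icc] at hj
        rcases eq_or_lt_of_le hj.2 with h | h
        · subst h
          have := histart' i hi.1 hir
          simp only [hgr]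
          linarith
        · have hgj : g j = (W j).2 - 1 := by simp [hg, h]
          rw [hgj]
          rcases eq_or_lt_of_le hj.1 with h' | h'
          · subst h'
            have := hWlen i (Finset.mem_Icc.2 ⟨hi.1, hi.2⟩)
            linarith
          · have := gap i j hi.1 (le_of_lt h') (by omega)
              (fun k _ hk => by omega)
            have hcast : ((j - i : ℕ) : ℝ) = (j : ℝ) - (i : ℝ) := by
              push_cast [Nat.cast_sub (le_of_lt h')]; ring
            rw [hcast] at this
            linarith
      · -- upper bound
        have hmem : i ∈ Finset.Icc i r := Finset.mem_Icc.2 ⟨le_rfl, hir⟩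
        have h1 := Finset.inf'_le (fun j => g j + (i : ℝ) - (j : ℝ)) hmem
        rcases eq_or_lt_of_le hir with h | h
        · subst h
          have := hiend' i le_rfl hi.2
          simp only [hgr] at h1
          linarith
        · have hgi : g i = (W i).2 - 1 := by simp [hg, h]
          rw [hgi] at h1
          linarith
    · push_neg at hir
      rw [hYsup i hir.le]
      constructor
      · have hmem : i ∈ Finset.Icc r i := Finset.mem_Icc.2 ⟨hir.le, le_rfl⟩
        have h1 := Finset.le_sup' (fun j => g j + (i : ℝ) - (j : ℝ)) hmem
        have hgi : g i = (W i).1 := by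
          simp only [hg]
          rw [if_neg (by omega : ¬ i < r), if_neg (by omega : ¬ i = r)]
        rw [hgi] at h1
        linarith
      · have : ∀ j ∈ Finset.Icc r i, g j + (i : ℝ) - (j : ℝ) ≤ (W i).2 - 1 := by
          intro j hj
          rw [Finset.mem_Icc] at hj
          rcases eq_or_lt_of_le hj.1 with h | h
          · subst h
            have := hiend' i hir.le hi.2
            simp only [hgr]
            linarith
          · have hgj : g j = (W j).1 := by
              simp only [hg]
              rw [if_neg (by omega : ¬ j < r), if_neg (by omega : ¬ j = r)]
            rw [hgj]
            have := gap j i (by omega) hj.2 hi.2 (fun k hk _ => by omega)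
            have hcast : ((i - j : ℕ) : ℝ) = (i : ℝ) - (j : ℝ) := by
              push_cast [Nat.cast_sub hj.2]; ring
            rw [hcast] at this
            linarith
        have := Finset.sup'_le (Finset.nonempty_Icc.2 hir.le) _ this
        linarith
  · rintro ⟨Y, hYr, hYmem, hYord⟩
    have hchain : ∀ d i, 1 ≤ i → i + d ≤ n → Y i + (d : ℝ) ≤ Y (i + d) := by
      intro d
      induction d with
      | zero => intro i _ _; simp
      | succ d ih =>
        intro i hi hin
        have h1 := ih i hi (by omega)
        have h2 := hYord (i + d) (i + d + 1) (by omega) (by omega) (by omega)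
        push_cast
        have : i + (d + 1) = (i + d) + 1 := by omega
        rw [this]
        linarith
    constructor
    · rw [histart]
      apply Finset.sup'_le
      intro i hi
      rw [Finset.mem_Icc] at hi
      have h1 := hchain (r - i) i hi.1 (by omega)
      rw [(by omega : i + (r - i) = r), hYr] at h1
      have h2 := (hYmem i (Finset.mem_Icc.2 ⟨hi.1, by omega⟩)).1
      have hcast : ((r - i : ℕ) : ℝ) = (r : ℝ) - (i : ℝ) := by
        push_cast [Nat.cast_sub hi.2]; ring
      rw [hcast] at h1
      linarith
    · rw [hiend]
      apply Finset.le_inf'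
      intro i hi
      rw [Finset.mem_Icc] at hi
      have h1 := hchain (i - r) r hr1 (by omega)
      rw [(by omega : r + (i - r) = i), hYr] at h1
      have h2 := (hYmem i (Finset.mem_Icc.2 ⟨by omega, hi.2⟩)).2
      have hcast : ((i - r : ℕ) : ℝ) = (i : ℝ) - (r : ℝ) := by
        push_cast [Nat.cast_sub hi.1]; ring
      rw [hcast] at h1
      linarith
end

section
/- Fix ε ∈ (0,1) and c ≥ 1/ε + 1. Let n = ⌊(c−1)/ε⌋, W[i] = [max(c, i(1+ε)) − c, max(c, i(1+ε))] for i in [1..n], and S[i] = [i−1, i]. Then: (a) the assignment E[i] = [(i−1)(1+ε), i(1+ε)] is a (1+ε)-solution for I, so the instance is ε-slack; (b) S is a solution for I; (c) after inserting a new task with window [0, c], the resulting instance is feasible; and (d) any allocator producing a solution for the new instance from S must change the slot of at least ⌊log_{1+ε}(1/ε)⌋ of the original tasks. -/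
open Classical in
/-- Auxiliary counting lemma for part (d): any solution of the augmented
instance must reallocate at least `⌊log_{1+ε}(1/ε)⌋` of the original tasks. -/
theorem aux_reconfig (ε c : ℝ) (hε0 : 0 < ε) (hε1 : ε < 1)
    (hc : 1 / ε + 1 ≤ c) (n : ℕ) (hn : n = ⌊(c - 1) / ε⌋₊) (S' : ℕ → ℝ)
    (h00 : 0 ≤ S' 0) (h0c : S' 0 + 1 ≤ c)
    (hwin : ∀ i ∈ Finset.Icc 1 n,
      max c ((i : ℝ) * (1 + ε)) - c ≤ S' i ∧ S' i + 1 ≤ max c ((i : ℝ) * (1 + ε)))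
    (hdisj : ∀ i j, i ≤ n → j ≤ n → i ≠ j → S' i + 1 ≤ S' j ∨ S' j + 1 ≤ S' i) :
    ⌊Real.logb (1 + ε) (1 / ε)⌋₊ ≤
      ((Finset.Icc 1 n).filter (fun i => S' i ≠ (i : ℝ) - 1)).card := by
  classical
  set M := (Finset.Icc 1 n).filter (fun i => S' i ≠ (i : ℝ) - 1) with hM
  have hεpos : (0:ℝ) < 1 + ε := by linarith
  have hinv : 1 / ε * ε = 1 := one_div_mul_cancel hε0.ne'
  have h1ε : (1:ℝ) ≤ 1 / ε := by rw [le_div_iff₀ hε0]; nlinarith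
  have hc2 : (2:ℝ) ≤ c := by linarith
  -- the key counting step
  have key : ∀ u : ℝ, c ≤ u → u < (n : ℝ) + 1 →
      (M.filter (fun (j : ℕ) => (j : ℝ) * (1 + ε) ≤ u)).card + 1 ≤
        (M.filter (fun (i : ℕ) => (i : ℝ) ≤ u)).card := by
    intro u hcu hun
    have h0M : (0:ℕ) ∉ (M.filter (fun (j : ℕ) => (j : ℝ) * (1 + ε) ≤ u)) := by
      simp [hM]
    set A := insert 0 (M.filter (fun (j : ℕ) => (j : ℝ) * (1 + ε) ≤ u)) with hA
    have hAcard : A.card = (M.filter (fun (j : ℕ) => (j : ℝ) * (1 + ε) ≤ u)).card + 1 :=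
      Finset.card_insert_of_notMem h0M
    rw [← hAcard]
    have hAn : ∀ j ∈ A, j ≤ n := by
      intro j hj
      rcases Finset.mem_insert.1 hj with rfl | hj
      · exact Nat.zero_le n
      · exact (Finset.mem_Icc.1 (Finset.mem_filter.1 (Finset.mem_filter.1 hj).1).1).2
    have hAM : ∀ j ∈ A, j ≠ 0 → S' j ≠ (j : ℝ) - 1 := by
      intro j hj hj0
      rcases Finset.mem_insert.1 hj with rfl | hj
      · exact absurd rfl hj0
      · exact (Finset.mem_filter.1 (Finset.mem_filter.1 hj).1).2
    have hslot : ∀ j ∈ A, 0 ≤ S' j ∧ S' j + 1 ≤ u := by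
      intro j hj
      rcases Finset.mem_insert.1 hj with rfl | hj
      · exact ⟨h00, h0c.trans hcu⟩
      · obtain ⟨hjM, hju⟩ := Finset.mem_filter.1 hj
        obtain ⟨hjI, _⟩ := Finset.mem_filter.1 hjM
        obtain ⟨hw1, hw2⟩ := hwin j hjI
        refine ⟨?_, hw2.trans (max_le hcu hju)⟩
        have := le_max_left c ((j : ℝ) * (1 + ε))
        linarith
    apply Finset.card_le_card_of_injOn (fun j => ⌊S' j⌋₊ + 1)
    · intro j hj
      obtain ⟨hp0, hpu⟩ := hslot j hj
      have hfl : ((⌊S' j⌋₊ : ℝ)) ≤ S' j := Nat.floor_le hp0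
      have hfl2 : S' j < (⌊S' j⌋₊ : ℝ) + 1 := Nat.lt_floor_add_one _
      have hiu : ((⌊S' j⌋₊ + 1 : ℕ) : ℝ) ≤ u := by push_cast; linarith
      have hin : ⌊S' j⌋₊ + 1 ≤ n := by
        have h := hiu.trans_lt hun
        have h2 : ((⌊S' j⌋₊ + 1 : ℕ) : ℝ) < ((n + 1 : ℕ) : ℝ) := by push_cast; push_cast at h; linarith
        have h3 : ⌊S' j⌋₊ + 1 < n + 1 := by exact_mod_cast h2
        omega
      have hne : S' (⌊S' j⌋₊ + 1) ≠ ((⌊S' j⌋₊ + 1 : ℕ) : ℝ) - 1 := by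
        intro hEq
        have hji : j ≠ ⌊S' j⌋₊ + 1 := by
          intro hjeq
          exact hAM j hj (by rw [hjeq]; exact Nat.succ_ne_zero _)
            (by rw [← hjeq] at hEq; exact_mod_cast hEq)
        rcases hdisj j (⌊S' j⌋₊ + 1) (hAn j hj) hin hji with h | h
        · rw [hEq] at h; push_cast at h; linarith
        · rw [hEq] at h; push_cast at h; linarith
      exact Finset.mem_filter.2 ⟨Finset.mem_filter.2
        ⟨Finset.mem_Icc.2 ⟨Nat.le_add_left 1 _, hin⟩, hne⟩, hiu⟩
    · intro j hj j' hj' hEq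
      by_contra hne
      have h1 := hslot j (Finset.mem_coe.1 hj)
      have h2 := hslot j' (Finset.mem_coe.1 hj')
      have e1 : ⌊S' j⌋₊ = ⌊S' j'⌋₊ := by
        have : ⌊S' j⌋₊ + 1 = ⌊S' j'⌋₊ + 1 := hEq
        omega
      have hfl : ((⌊S' j⌋₊ : ℝ)) ≤ S' j := Nat.floor_le h1.1
      have hfl2 : S' j < (⌊S' j⌋₊ : ℝ) + 1 := Nat.lt_floor_add_one _
      have hfl' : ((⌊S' j'⌋₊ : ℝ)) ≤ S' j' := Nat.floor_le h2.1
      have hfl2' : S' j' < (⌊S' j'⌋₊ : ℝ) + 1 := Nat.lt_floor_add_one _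
      rw [← e1] at hfl' hfl2'
      rcases hdisj j j' (hAn j (Finset.mem_coe.1 hj)) (hAn j' (Finset.mem_coe.1 hj')) hne with h | h
      · linarith
      · linarith
  -- now the chain argument
  set k := ⌊Real.logb (1 + ε) (1 / ε)⌋₊ with hk
  rcases Nat.eq_zero_or_pos k with hk0 | hkpos
  · rw [hk0]; exact Nat.zero_le _
  have hb1 : (1:ℝ) < 1 + ε := by linarith
  have hpow : (1 + ε) ^ k ≤ 1 / ε := by
    have hlog0 : 0 ≤ Real.logb (1 + ε) (1 / ε) := Real.logb_nonneg hb1 h1ε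
    have h1 : (k : ℝ) ≤ Real.logb (1 + ε) (1 / ε) := Nat.floor_le hlog0
    calc (1 + ε) ^ k = (1 + ε) ^ (k : ℝ) := (Real.rpow_natCast _ _).symm
      _ ≤ (1 + ε) ^ Real.logb (1 + ε) (1 / ε) :=
          Real.rpow_le_rpow_of_exponent_le hb1.le h1
      _ = 1 / ε := Real.rpow_logb (by linarith) (by linarith) (by positivity)
  have hcε : 1 + ε ≤ c * ε := by
    have h1 : (1 / ε + 1) * ε ≤ c * ε := mul_le_mul_of_nonneg_right hc hε0.le
    nlinarith [h1, hinv]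
  have hkey : c ≤ (c - 1) * (1 + ε) := by nlinarith [hcε]
  have hpow' : (1 + ε) ^ (k - 1) * (ε * (1 + ε)) ≤ 1 := by
    have e1 : (1 + ε) ^ (k - 1) * (1 + ε) = (1 + ε) ^ k := by
      rw [← pow_succ]; congr 1; omega
    calc (1 + ε) ^ (k - 1) * (ε * (1 + ε)) = ((1 + ε) ^ (k - 1) * (1 + ε)) * ε := by ring
      _ = (1 + ε) ^ k * ε := by rw [e1]
      _ ≤ (1 / ε) * ε := mul_le_mul_of_nonneg_right hpow hε0.le
      _ = 1 := hinv
  have hfloor_lt : (c - 1) / ε < (n : ℝ) + 1 := by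
    rw [hn]
    have := Nat.lt_floor_add_one ((c - 1) / ε)
    push_cast
    push_cast at this
    linarith
  have hkb : c * (1 + ε) ^ (k - 1) < (n : ℝ) + 1 := by
    have h4 : (c * (1 + ε) ^ (k - 1) * ε) * (1 + ε) ≤ c := by
      have h5 := mul_le_mul_of_nonneg_left hpow' (show (0:ℝ) ≤ c by linarith)
      calc (c * (1 + ε) ^ (k - 1) * ε) * (1 + ε)
          = c * ((1 + ε) ^ (k - 1) * (ε * (1 + ε))) := by ring
        _ ≤ c * 1 := h5
        _ = c := mul_one c
    have h6 : c * (1 + ε) ^ (k - 1) * ε ≤ c - 1 :=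
      le_of_mul_le_mul_right (h4.trans hkey) hεpos
    have h7 : c * (1 + ε) ^ (k - 1) ≤ (c - 1) / ε := by
      rw [le_div_iff₀ hε0]; exact h6
    exact h7.trans_lt hfloor_lt
  have hone_le_pow : ∀ m : ℕ, (1:ℝ) ≤ (1 + ε) ^ m := fun m => one_le_pow₀ hb1.le
  have hc_le : ∀ m : ℕ, m ≤ k - 1 → c * (1 + ε) ^ m < (n : ℝ) + 1 := by
    intro m hm
    have : (1 + ε) ^ m ≤ (1 + ε) ^ (k - 1) := pow_le_pow_right₀ hb1.le hm
    have h8 : c * (1 + ε) ^ m ≤ c * (1 + ε) ^ (k - 1) :=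
      mul_le_mul_of_nonneg_left this (by linarith)
    exact h8.trans_lt hkb
  have hcu : ∀ m : ℕ, c ≤ c * (1 + ε) ^ m := fun m =>
    le_mul_of_one_le_right (by linarith) (hone_le_pow m)
  have chain : ∀ l, l < k → l + 1 ≤ (M.filter (fun (i : ℕ) => (i : ℝ) ≤ c * (1 + ε) ^ l)).card := by
    intro l
    induction l with
    | zero =>
      intro _
      have h9 := key (c * (1 + ε) ^ 0) (hcu 0) (hc_le 0 (by omega))
      omega
    | succ l ih =>
      intro hlk
      have h1 := ih (by omega)
      have h2 := key (c * (1 + ε) ^ (l + 1)) (hcu (l + 1)) (hc_le (l + 1) (by omega))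
      have hfe : (M.filter (fun (j : ℕ) => (j : ℝ) * (1 + ε) ≤ c * (1 + ε) ^ (l + 1))) =
          M.filter (fun (j : ℕ) => (j : ℝ) ≤ c * (1 + ε) ^ l) := by
        apply Finset.filter_congr
        intro j _
        rw [pow_succ, ← mul_assoc]
        exact mul_le_mul_iff_of_pos_right hεpos
      rw [hfe] at h2
      have h3 : (M.filter (fun (i : ℕ) => (i : ℝ) ≤ c * (1 + ε) ^ l)).card ≤
          (M.filter (fun (j : ℕ) => (j : ℝ) ≤ c * (1 + ε) ^ l)).card := le_refl _
      omega
  have hfin := chain (k - 1) (by omega)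
  have hsub : (M.filter (fun (i : ℕ) => (i : ℝ) ≤ c * (1 + ε) ^ (k - 1))).card ≤ M.card :=
    Finset.card_le_card (Finset.filter_subset _ _)
  omega

open Classical in
/-- Lower Bound instance.  Fix `ε ∈ (0,1)`, `c ≥ 1/ε + 1`, `n = ⌊(c-1)/ε⌋`,
    windows `W i = [max c (i(1+ε)) - c, max c (i(1+ε))]` for `i ∈ [1..n]`
    and current slots `S i = [i-1, i]`.  Then:
    (a) `E i = [(i-1)(1+ε), i(1+ε)]` is a `(1+ε)`-solution, so the instance
    is `ε`-slack;
    (b) `S` is a solution;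
    (c) after inserting a task (index `0`) with window `[0, c]` the instance
    is feasible;
    (d) any solution `S'` of the new instance changes the slots of at least
    `⌊log_{1+ε}(1/ε)⌋` of the original tasks. -/
theorem lower_bound_instance (ε c : ℝ) (hε0 : 0 < ε) (hε1 : ε < 1)
    (hc : 1 / ε + 1 ≤ c) (n : ℕ) (hn : n = ⌊(c - 1) / ε⌋₊)
    (W : ℕ → ℝ × ℝ) (hW : ∀ i, W i = (max c ((i : ℝ) * (1 + ε)) - c,
                                       max c ((i : ℝ) * (1 + ε))))
    (W0 : ℝ × ℝ) (hW0 : W0 = (0, c))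
    (S : ℕ → ℝ) (hS : ∀ i, S i = (i : ℝ) - 1) :
    -- (a) the instance is ε-slack, witnessed by E
    ((∀ i ∈ Finset.Icc 1 n,
        (W i).1 ≤ ((i : ℝ) - 1) * (1 + ε) ∧
        ((i : ℝ) - 1) * (1 + ε) + (1 + ε) ≤ (W i).2) ∧
      (∀ i j, 1 ≤ i → i < j → j ≤ n →
        ((i : ℝ) - 1) * (1 + ε) + (1 + ε) ≤ ((j : ℝ) - 1) * (1 + ε))) ∧
    -- (b) S is a solution
    ((∀ i ∈ Finset.Icc 1 n, (W i).1 ≤ S i ∧ S i + 1 ≤ (W i).2) ∧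
      (∀ i j, 1 ≤ i → i < j → j ≤ n → S i + 1 ≤ S j)) ∧
    -- (c) the new instance (task 0 with window [0,c] added) is feasible
    (∃ Y : ℕ → ℝ, (W0.1 ≤ Y 0 ∧ Y 0 + 1 ≤ W0.2) ∧
      (∀ i ∈ Finset.Icc 1 n, (W i).1 ≤ Y i ∧ Y i + 1 ≤ (W i).2) ∧
      (∀ i j, i ≤ n → j ≤ n → i ≠ j → Y i + 1 ≤ Y j ∨ Y j + 1 ≤ Y i)) ∧
    -- (d) any solution of the new instance makes many reallocations
    (∀ S' : ℕ → ℝ,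
      (W0.1 ≤ S' 0 ∧ S' 0 + 1 ≤ W0.2) →
      (∀ i ∈ Finset.Icc 1 n, (W i).1 ≤ S' i ∧ S' i + 1 ≤ (W i).2) →
      (∀ i j, i ≤ n → j ≤ n → i ≠ j → S' i + 1 ≤ S' j ∨ S' j + 1 ≤ S' i) →
      ⌊Real.logb (1 + ε) (1 / ε)⌋₊ ≤
        ((Finset.Icc 1 n).filter (fun i => S' i ≠ S i)).card) := by
  subst hW0
  have hinv : 1 / ε * ε = 1 := one_div_mul_cancel hε0.ne'
  have h1ε : (1:ℝ) ≤ 1 / ε := by rw [le_div_iff₀ hε0]; nlinarith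
  have h1εc : 1 + ε ≤ c := by nlinarith
  have hc2 : (2:ℝ) ≤ c := by linarith
  have hiεle : ∀ i : ℕ, i ≤ n → (i : ℝ) * ε ≤ c - 1 := by
    intro i hi
    have h1 : (0:ℝ) ≤ (c - 1) / ε := div_nonneg (by linarith) hε0.le
    have h2 : (n : ℝ) ≤ (c - 1) / ε := by rw [hn]; exact Nat.floor_le h1
    have h3 : (i : ℝ) ≤ (n : ℝ) := by exact_mod_cast hi
    have h4 : (i : ℝ) ≤ (c - 1) / ε := h3.trans h2
    calc (i : ℝ) * ε ≤ ((c - 1) / ε) * ε := mul_le_mul_of_nonneg_right h4 hε0.le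
      _ = c - 1 := by field_simp
  refine ⟨⟨?_, ?_⟩, ⟨?_, ?_⟩, ?_, ?_⟩
  · -- (a) windows for E
    intro i hi
    obtain ⟨hi1, hin⟩ := Finset.mem_Icc.1 hi
    have hi1' : (1:ℝ) ≤ (i : ℝ) := by exact_mod_cast hi1
    rw [hW i]
    constructor
    · have h1 : max c ((i : ℝ) * (1 + ε)) ≤ ((i : ℝ) - 1) * (1 + ε) + c := by
        apply max_le
        · nlinarith
        · nlinarith
      show max c ((i : ℝ) * (1 + ε)) - c ≤ ((i : ℝ) - 1) * (1 + ε)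
      linarith [h1]
    · have he : ((i : ℝ) - 1) * (1 + ε) + (1 + ε) = (i : ℝ) * (1 + ε) := by ring
      show ((i : ℝ) - 1) * (1 + ε) + (1 + ε) ≤ max c ((i : ℝ) * (1 + ε))
      rw [he]
      exact le_max_right c ((i : ℝ) * (1 + ε))
  · -- (a) ordering
    intro i j hi hij hjn
    have h1 : (i : ℝ) ≤ (j : ℝ) - 1 := by
      have : i + 1 ≤ j := hij
      have := (Nat.cast_le (α := ℝ)).2 this
      push_cast at this
      linarith
    nlinarith
  · -- (b) windows for S
    intro i hi
    obtain ⟨hi1, hin⟩ := Finset.mem_Icc.1 hi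
    have hi1' : (1:ℝ) ≤ (i : ℝ) := by exact_mod_cast hi1
    have hiε := hiεle i hin
    rw [hW i, hS i]
    constructor
    · have h1 : max c ((i : ℝ) * (1 + ε)) ≤ ((i : ℝ) - 1) + c := by
        apply max_le
        · linarith
        · nlinarith
      show max c ((i : ℝ) * (1 + ε)) - c ≤ (i : ℝ) - 1
      linarith [h1]
    · have h2 : (i : ℝ) ≤ (i : ℝ) * (1 + ε) := by nlinarith
      have h3 := le_max_right c ((i : ℝ) * (1 + ε))
      show (i : ℝ) - 1 + 1 ≤ max c ((i : ℝ) * (1 + ε))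
      linarith
  · -- (b) ordering
    intro i j hi hij hjn
    rw [hS i, hS j]
    have : i + 1 ≤ j := hij
    have h1 := (Nat.cast_le (α := ℝ)).2 this
    push_cast at h1
    linarith
  · -- (c) feasibility with the new task
    refine ⟨fun i => (i : ℝ), ⟨by norm_num, by show ((0:ℕ):ℝ) + 1 ≤ c; norm_num; linarith⟩, ?_, ?_⟩
    · intro i hi
      obtain ⟨hi1, hin⟩ := Finset.mem_Icc.1 hi
      have hi1' : (1:ℝ) ≤ (i : ℝ) := by exact_mod_cast hi1
      have hiε := hiεle i hin
      rw [hW i]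
      constructor
      · have h1 : max c ((i : ℝ) * (1 + ε)) ≤ (i : ℝ) + c := by
          apply max_le
          · linarith
          · nlinarith
        show max c ((i : ℝ) * (1 + ε)) - c ≤ (i : ℝ)
        linarith [h1]
      · show (i : ℝ) + 1 ≤ max c ((i : ℝ) * (1 + ε))
        rcases le_or_gt 1 ((i : ℝ) * ε) with h | h
        · exact le_trans (by nlinarith) (le_max_right c ((i : ℝ) * (1 + ε)))
        · refine le_trans ?_ (le_max_left c ((i : ℝ) * (1 + ε)))
          have h2 : (i : ℝ) < 1 / ε := by
            rw [lt_div_iff₀ hε0]; linarith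
          linarith
    · intro i j _ _ hij
      rcases lt_or_gt_of_ne hij with h | h
      · left
        have : i + 1 ≤ j := h
        have h1 := (Nat.cast_le (α := ℝ)).2 this
        push_cast at h1
        linarith
      · right
        have : j + 1 ≤ i := h
        have h1 := (Nat.cast_le (α := ℝ)).2 this
        push_cast at h1
        linarith
  · -- (d) reallocation lower bound
    intro S' h0 hwin hdisj
    have h0' : 0 ≤ S' 0 ∧ S' 0 + 1 ≤ c := by simpa using h0
    have hwin' : ∀ i ∈ Finset.Icc 1 n,
        max c ((i : ℝ) * (1 + ε)) - c ≤ S' i ∧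
          S' i + 1 ≤ max c ((i : ℝ) * (1 + ε)) := by
      intro i hi
      have := hwin i hi
      rwa [hW i] at this
    have hmain := aux_reconfig ε c hε0 hε1 hc n hn S' h0'.1 h0'.2 hwin' hdisj
    have hfe : (Finset.Icc 1 n).filter (fun i => S' i ≠ S i) =
        (Finset.Icc 1 n).filter (fun (i : ℕ) => S' i ≠ (i : ℝ) - 1) := by
      apply Finset.filter_congr
      intro i _
      rw [hS i]
    rw [hfe]
    exact hmain
end

section
/- Let X = [a·2^k, (a+1)·2^k] be an aligned interval (k, a ∈ ℤ). Then there exists an interval Y of length 4·span(X) such that every interval Z with align(Z) ⊆ X satisfies Z ⊆ Y, where align(Z) denotes a largest aligned interval contained in Z. -/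
/-- An interval `[x, y]` is aligned iff `x = a·2^k` and `y = (a+1)·2^k` for
    some integers `k, a`. -/
def AlignedInterval (x y : ℝ) : Prop :=
  ∃ k a : ℤ, x = (a : ℝ) * 2 ^ k ∧ y = ((a : ℝ) + 1) * 2 ^ k

/-- Align's properties.  For any aligned interval `X = [a·2^k, (a+1)·2^k]`
    there is an interval `Y` of length `4·span(X)` containing every interval
    `Z` for which some largest aligned subinterval of `Z` is contained in
    `X`. -/
theorem align_properties (k a : ℤ) :
    ∃ Y₁ Y₂ : ℝ, Y₂ - Y₁ = 4 * (((a : ℝ) + 1) * 2 ^ k - (a : ℝ) * 2 ^ k) ∧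
      ∀ Z₁ Z₂ A₁ A₂ : ℝ, Z₁ ≤ Z₂ →
        AlignedInterval A₁ A₂ → Z₁ ≤ A₁ → A₂ ≤ Z₂ →
        (∀ B₁ B₂ : ℝ, AlignedInterval B₁ B₂ → Z₁ ≤ B₁ → B₂ ≤ Z₂ →
          B₂ - B₁ ≤ A₂ - A₁) →
        ((a : ℝ) * 2 ^ k ≤ A₁ ∧ A₂ ≤ ((a : ℝ) + 1) * 2 ^ k) →
        Y₁ ≤ Z₁ ∧ Z₂ ≤ Y₂ := by
  have h2k : (0:ℝ) < 2 ^ k := zpow_pos (by norm_num) k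
  have h2k1 : (2:ℝ) ^ (k+1) = 2 * 2 ^ k := by
    rw [zpow_add_one₀ (by norm_num : (2:ℝ) ≠ 0)]; ring
  rcases Int.even_or_odd a with ⟨b, hb⟩ | ⟨b, hb⟩
  · -- a = b + b (even)
    refine ⟨((a:ℝ) - 2) * 2 ^ k, ((a:ℝ) + 2) * 2 ^ k, by ring, ?_⟩
    intro Z₁ Z₂ A₁ A₂ hZ hA hZA₁ hZA₂ hmax hX
    obtain ⟨hX₁, hX₂⟩ := hX
    have hAle : A₁ ≤ A₂ := by
      obtain ⟨j, c, hc1, hc2⟩ := hA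
      have : (0:ℝ) < 2 ^ j := zpow_pos (by norm_num) j
      rw [hc1, hc2]; nlinarith
    have haR : (a:ℝ) = (b:ℝ) + (b:ℝ) := by exact_mod_cast congrArg (Int.cast : ℤ → ℝ) hb
    constructor
    · by_contra h
      push_neg at h
      -- [(a-1)2^k, a·2^k] is aligned and contained in Z
      have hal1 : AlignedInterval (((a:ℝ) - 1) * 2 ^ k) ((a:ℝ) * 2 ^ k) :=
        ⟨k, a - 1, by push_cast; ring, by push_cast; ring⟩
      have h1 := hmax _ _ hal1 (by nlinarith) (by linarith)
      -- hence A = X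
      have hA1 : A₁ = (a:ℝ) * 2 ^ k := by linarith
      have hA2 : A₂ = ((a:ℝ) + 1) * 2 ^ k := by linarith
      -- now [(a-2)2^k, a·2^k] is aligned of length 2^(k+1), contained in Z
      have hal2 : AlignedInterval (((a:ℝ) - 2) * 2 ^ k) ((a:ℝ) * 2 ^ k) :=
        ⟨k + 1, b - 1, by push_cast [h2k1]; nlinarith, by push_cast [h2k1]; nlinarith⟩
      have h2 := hmax _ _ hal2 (by linarith) (by linarith)
      nlinarith
    · by_contra h
      push_neg at h
      have hal1 : AlignedInterval (((a:ℝ) + 1) * 2 ^ k) (((a:ℝ) + 2) * 2 ^ k) :=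
        ⟨k, a + 1, by push_cast; ring, by push_cast; ring⟩
      have h1 := hmax _ _ hal1 (by linarith) (by linarith)
      have hA1 : A₁ = (a:ℝ) * 2 ^ k := by linarith
      have hA2 : A₂ = ((a:ℝ) + 1) * 2 ^ k := by linarith
      have hal2 : AlignedInterval ((a:ℝ) * 2 ^ k) (((a:ℝ) + 2) * 2 ^ k) :=
        ⟨k + 1, b, by push_cast [h2k1]; nlinarith, by push_cast [h2k1]; nlinarith⟩
      have h2 := hmax _ _ hal2 (by linarith) (by linarith)
      nlinarith
  · -- a = 2b + 1 (odd)
    refine ⟨((a:ℝ) - 1) * 2 ^ k, ((a:ℝ) + 3) * 2 ^ k, by ring, ?_⟩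
    intro Z₁ Z₂ A₁ A₂ hZ hA hZA₁ hZA₂ hmax hX
    obtain ⟨hX₁, hX₂⟩ := hX
    have hAle : A₁ ≤ A₂ := by
      obtain ⟨j, c, hc1, hc2⟩ := hA
      have : (0:ℝ) < 2 ^ j := zpow_pos (by norm_num) j
      rw [hc1, hc2]; nlinarith
    have haR : (a:ℝ) = 2 * (b:ℝ) + 1 := by exact_mod_cast congrArg (Int.cast : ℤ → ℝ) hb
    constructor
    · by_contra h
      push_neg at h
      have hal1 : AlignedInterval (((a:ℝ) - 1) * 2 ^ k) ((a:ℝ) * 2 ^ k) :=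
        ⟨k, a - 1, by push_cast; ring, by push_cast; ring⟩
      have h1 := hmax _ _ hal1 (by linarith) (by linarith)
      have hA1 : A₁ = (a:ℝ) * 2 ^ k := by linarith
      have hA2 : A₂ = ((a:ℝ) + 1) * 2 ^ k := by linarith
      have hal2 : AlignedInterval (((a:ℝ) - 1) * 2 ^ k) (((a:ℝ) + 1) * 2 ^ k) :=
        ⟨k + 1, b, by push_cast [h2k1]; nlinarith, by push_cast [h2k1]; nlinarith⟩
      have h2 := hmax _ _ hal2 (by linarith) (by linarith)
      nlinarith
    · by_contra h
      push_neg at h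
      have hal1 : AlignedInterval (((a:ℝ) + 1) * 2 ^ k) (((a:ℝ) + 2) * 2 ^ k) :=
        ⟨k, a + 1, by push_cast; ring, by push_cast; ring⟩
      have h1 := hmax _ _ hal1 (by linarith) (by linarith)
      have hA1 : A₁ = (a:ℝ) * 2 ^ k := by linarith
      have hA2 : A₂ = ((a:ℝ) + 1) * 2 ^ k := by linarith
      have hal2 : AlignedInterval (((a:ℝ) + 1) * 2 ^ k) (((a:ℝ) + 3) * 2 ^ k) :=
        ⟨k + 1, b + 1, by push_cast [h2k1]; nlinarith, by push_cast [h2k1]; nlinarith⟩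
      have h2 := hmax _ _ hal2 (by linarith) (by linarith)
      nlinarith
end

section
/- Fix γ a power of 2 with γ = 2^k, k ≥ 0, and m ∈ ℕ. Define the instance with n = (2γ)^m + 1 unit tasks: W[i] = [0, (2γ)^{j+1}] for each i ∈ [(2γ)^{j-1}+1 .. (2γ)^j] and each j ∈ [1..m], W[n] = [0, 2γ], with current partial allocation S[i] = [i−1, i] for i ∈ [1..n−1] and task n unallocated. Then: (a) the instance is γ-underallocated; and (b) any modification of S to a full solution must change the slots of at least m = log_{2γ}(n−1) of the tasks 1..n−1. -/
/-- Pigeonhole: a finite family of pairwise `≥ 1`-separated reals in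
    `[0, N-1]` has at most `N` members. -/
lemma unit_pigeon (T : Finset ℕ) (f : ℕ → ℝ) (N : ℕ)
    (h0 : ∀ i ∈ T, 0 ≤ f i) (h1 : ∀ i ∈ T, f i ≤ (N : ℝ) - 1)
    (hsep : ∀ i ∈ T, ∀ j ∈ T, i ≠ j → f i + 1 ≤ f j ∨ f j + 1 ≤ f i) :
    T.card ≤ N := by
  classical
  have key : T.card ≤ (Finset.Icc (0:ℤ) ((N:ℤ)-1)).card := by
    apply Finset.card_le_card_of_injOn (fun i => ⌊f i⌋)
    · intro i hi
      rw [Finset.mem_coe, Finset.mem_Icc]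
      refine ⟨Int.floor_nonneg.mpr (h0 i hi), ?_⟩
      have h2 : ⌊f i⌋ ≤ ⌊(N:ℝ)-1⌋ := Int.floor_le_floor (h1 i hi)
      have h3 : ((N:ℝ)-1) = (((N:ℤ)-1 : ℤ):ℝ) := by push_cast; ring
      rwa [h3, Int.floor_intCast] at h2
    · intro i hi j hj heq
      by_contra hne
      rcases hsep i hi j hj hne with h | h
      · have h2 : ⌊f i⌋ + 1 ≤ ⌊f j⌋ := by
          apply Int.le_floor.mpr
          push_cast
          have := Int.floor_le (f i)
          linarith
        simp only at heq
        omega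
      · have h2 : ⌊f j⌋ + 1 ≤ ⌊f i⌋ := by
          apply Int.le_floor.mpr
          push_cast
          have := Int.floor_le (f j)
          linarith
        simp only at heq
        omega
  rwa [Int.card_Icc, show ((N:ℤ) - 1 + 1 - 0).toNat = N by omega] at key

open Classical in
/-- Non-Genericity instance.  Fix `γ = 2^k` and `m ∈ ℕ`, and set
    `n = (2γ)^m + 1`.  Unit tasks `1..n` have windows
    `W i = [0, (2γ)^(j+1)]` for `i ∈ [(2γ)^(j-1)+1 .. (2γ)^j]`, `j ∈ [1..m]`,
    `W 1 = W n = [0, 2γ]`, and current partial allocation `S i = [i-1, i]`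
    for `i ∈ [1..n-1]`, task `n` unallocated.  Then:
    (a) the instance is `γ`-underallocated; and
    (b) any full solution `S'` changes at least `m = log_{2γ}(n-1)` of the
    slots of tasks `1..n-1`. -/
theorem non_genericity (k m : ℕ) (γ : ℕ) (hγ : γ = 2 ^ k)
    (n : ℕ) (hn : n = (2 * γ) ^ m + 1)
    (W : ℕ → ℝ × ℝ)
    (hW1 : W 1 = (0, ((2 * γ : ℕ) : ℝ)))
    (hW : ∀ j ∈ Finset.Icc 1 m, ∀ i : ℕ,
      (2 * γ) ^ (j - 1) + 1 ≤ i → i ≤ (2 * γ) ^ j →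
      W i = (0, (((2 * γ) ^ (j + 1) : ℕ) : ℝ)))
    (hWn : W n = (0, ((2 * γ : ℕ) : ℝ)))
    (S : ℕ → ℝ) (hS : ∀ i, S i = (i : ℝ) - 1) :
    -- (a) γ-underallocated
    (∃ G : ℕ → ℝ,
      (∀ i ∈ Finset.Icc 1 n, (W i).1 ≤ G i ∧ G i + (γ : ℝ) ≤ (W i).2) ∧
      (∀ i j, 1 ≤ i → 1 ≤ j → i ≤ n → j ≤ n → i ≠ j →
        G i + (γ : ℝ) ≤ G j ∨ G j + (γ : ℝ) ≤ G i)) ∧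
    -- (b) every full solution reallocates at least m of the tasks 1..n-1
    (∀ S' : ℕ → ℝ,
      (∀ i ∈ Finset.Icc 1 n, (W i).1 ≤ S' i ∧ S' i + 1 ≤ (W i).2) →
      (∀ i j, 1 ≤ i → 1 ≤ j → i ≤ n → j ≤ n → i ≠ j →
        S' i + 1 ≤ S' j ∨ S' j + 1 ≤ S' i) →
      m ≤ ((Finset.Icc 1 (n - 1)).filter (fun i => S' i ≠ S i)).card) := by
  have hγ1 : 1 ≤ γ := by rw [hγ]; exact Nat.one_le_two_pow
  have hb : 1 < 2 * γ := by omega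
  have hn2 : 2 ≤ n := by
    have : 1 ≤ (2 * γ) ^ m := Nat.one_le_pow _ _ (by omega)
    omega
  have hnm : n - 1 = (2 * γ) ^ m := by omega
  -- window classification for "middle" tasks
  have hwin : ∀ i : ℕ, 2 ≤ i → i ≤ (2 * γ) ^ m →
      ∃ jj : ℕ, 1 ≤ jj ∧ jj ≤ m ∧ (2 * γ) ^ (jj - 1) < i ∧ i ≤ (2 * γ) ^ jj ∧
        W i = (0, (((2 * γ) ^ (jj + 1) : ℕ) : ℝ)) := by
    intro i h2 him
    have hjj1 : 1 ≤ Nat.clog (2 * γ) i := Nat.clog_pos hb h2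
    have hjjm : Nat.clog (2 * γ) i ≤ m := (Nat.clog_le_iff_le_pow hb).mpr him
    have hlow : (2 * γ) ^ (Nat.clog (2 * γ) i - 1) < i := by
      have := Nat.pow_pred_clog_lt_self hb (x := i) (by omega)
      simpa [Nat.pred_eq_sub_one] using this
    have hhigh : i ≤ (2 * γ) ^ Nat.clog (2 * γ) i := Nat.le_pow_clog hb i
    exact ⟨Nat.clog (2 * γ) i, hjj1, hjjm, hlow, hhigh,
      hW _ (Finset.mem_Icc.mpr ⟨hjj1, hjjm⟩) i (by omega) hhigh⟩
  constructor
  · -- part (a)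
    refine ⟨fun i => if i = 1 then 0 else if i = n then (γ:ℝ) else (i:ℝ) * γ, ?_, ?_⟩
    · intro i hi
      rw [Finset.mem_Icc] at hi
      by_cases h1 : i = 1
      · subst h1
        simp only [if_pos rfl, hW1]
        constructor
        · exact le_refl 0
        · have : (0:ℝ) ≤ γ := by positivity
          push_cast
          linarith
      · by_cases h2 : i = n
        · subst h2
          simp only [if_neg h1, if_pos rfl, hWn]
          constructor
          · positivity
          · push_cast; ring_nf; nlinarith [show (0:ℝ) ≤ (γ:ℝ) by positivity]
        · obtain ⟨jj, hjj1, hjjm, hlo, hhi, hWi⟩ := hwin i (by omega) (by omega)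
          simp only [if_neg h1, if_neg h2, hWi]
          constructor
          · positivity
          · have hnat : (i + 1) * γ ≤ (2 * γ) ^ (jj + 1) := by
              have h1p : 1 ≤ (2 * γ) ^ jj := Nat.one_le_pow _ _ (by omega)
              have : i + 1 ≤ 2 * (2 * γ) ^ jj := by omega
              calc (i + 1) * γ ≤ (2 * (2 * γ) ^ jj) * γ := Nat.mul_le_mul_right _ this
                _ = (2 * γ) ^ (jj + 1) := by ring
            have := (Nat.cast_le (α := ℝ)).mpr hnat
            push_cast at this ⊢
            linarith
    · -- separation
      intro i j h1i h1j hin hjn hij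
      set c : ℕ → ℕ := fun i => if i = 1 then 0 else if i = n then 1 else i with hc
      have hG : ∀ l : ℕ, 1 ≤ l → l ≤ n →
          (if l = 1 then (0:ℝ) else if l = n then (γ:ℝ) else (l:ℝ) * γ) = (c l : ℝ) * γ := by
        intro l _ _
        simp only [hc]
        split_ifs <;> push_cast <;> ring
      have hcne : c i ≠ c j := by
        simp only [hc]
        split_ifs <;> omega
      have hstep : ∀ a b : ℕ, 1 ≤ a → 1 ≤ b → a ≤ n → b ≤ n → c a < c b →
          (if a = 1 then (0:ℝ) else if a = n then (γ:ℝ) else (a:ℝ) * γ) + γ ≤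
          (if b = 1 then (0:ℝ) else if b = n then (γ:ℝ) else (b:ℝ) * γ) := by
        intro a b ha hb' han hbn hlt
        rw [hG a ha han, hG b hb' hbn]
        have : ((c a : ℝ) + 1) ≤ (c b : ℝ) := by exact_mod_cast hlt
        have hγ0 : (0:ℝ) ≤ γ := by positivity
        nlinarith
      rcases Nat.lt_or_ge (c i) (c j) with h | h
      · exact Or.inl (hstep i j h1i h1j hin hjn h)
      · exact Or.inr (hstep j i h1j h1i hjn hin (by omega))
  · -- part (b)
    intro S' hmem hdisj
    -- every task in [1,n] has window starting at 0
    have hlow0 : ∀ i : ℕ, 1 ≤ i → i ≤ n → (W i).1 = 0 := by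
      intro i h1 h2
      by_cases hi1 : i = 1
      · subst hi1; rw [hW1]
      · by_cases hin : i = n
        · subst hin; rw [hWn]
        · obtain ⟨jj, _, _, _, _, hWi⟩ := hwin i (by omega) (by omega)
          rw [hWi]
    -- window upper bounds for tasks 1..(2γ)^(j-1) and n, relative to (2γ)^j
    have hupper : ∀ j : ℕ, 1 ≤ j → j ≤ m → ∀ i : ℕ, 1 ≤ i →
        (i ≤ (2 * γ) ^ (j - 1) ∨ i = n) → (W i).2 ≤ (((2 * γ) ^ j : ℕ) : ℝ) := by
      intro j hj1 hjm i h1 hcase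
      have hbpow : (2 * γ : ℕ) ≤ (2 * γ) ^ j := by
        calc (2 * γ) = (2 * γ) ^ 1 := (pow_one _).symm
          _ ≤ (2 * γ) ^ j := Nat.pow_le_pow_right (by omega) hj1
      rcases hcase with hile | hin
      · by_cases hi1 : i = 1
        · subst hi1; rw [hW1]
          show ((2 * γ : ℕ) : ℝ) ≤ (((2 * γ) ^ j : ℕ) : ℝ)
          exact_mod_cast hbpow
        · have h2 : 2 ≤ i := by omega
          have him : i ≤ (2 * γ) ^ m := le_trans hile (Nat.pow_le_pow_right (by omega) (by omega))
          obtain ⟨jj, hjj1, hjjm, hlo, hhi, hWi⟩ := hwin i h2 him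
          have hjlt : jj + 1 ≤ j := by
            have hpp : (2 * γ) ^ (jj - 1) < (2 * γ) ^ (j - 1) := lt_of_lt_of_le hlo hile
            have := (Nat.pow_lt_pow_iff_right hb).mp hpp
            omega
          rw [hWi]
          show (((2 * γ) ^ (jj + 1) : ℕ) : ℝ) ≤ (((2 * γ) ^ j : ℕ) : ℝ)
          exact_mod_cast Nat.pow_le_pow_right (by omega) hjlt
      · subst hin; rw [hWn]
        show ((2 * γ : ℕ) : ℝ) ≤ (((2 * γ) ^ j : ℕ) : ℝ)
        exact_mod_cast hbpow
    -- key claim: each block j contains a reallocated task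
    have key : ∀ j : ℕ, 1 ≤ j → j ≤ m →
        ∃ i : ℕ, (2 * γ) ^ (j - 1) < i ∧ i ≤ (2 * γ) ^ j ∧ S' i ≠ S i := by
      intro j hj1 hjm
      by_contra hcon
      push_neg at hcon
      set N := (2 * γ) ^ (j - 1) with hN
      have hNpos : 1 ≤ N := Nat.one_le_pow _ _ (by omega)
      have hNm : N ≤ (2 * γ) ^ m := Nat.pow_le_pow_right (by omega) (by omega)
      have hNjm : (2 * γ) ^ j ≤ (2 * γ) ^ m := Nat.pow_le_pow_right (by omega) hjm
      -- membership in [1,n] for the relevant tasks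
      have hTn : ∀ i : ℕ, 1 ≤ i → (i ≤ N ∨ i = n) → 1 ≤ i ∧ i ≤ n := by
        intro i h1 hc
        rcases hc with h | h
        · exact ⟨h1, by omega⟩
        · exact ⟨h1, by omega⟩
      set T : Finset ℕ := insert n (Finset.Icc 1 N) with hT
      have hmemT : ∀ i ∈ T, 1 ≤ i ∧ (i ≤ N ∨ i = n) := by
        intro i hi
        rw [hT, Finset.mem_insert, Finset.mem_Icc] at hi
        rcases hi with h | h
        · exact ⟨by omega, Or.inr h⟩
        · exact ⟨h.1, Or.inl h.2⟩
      have hcardT : T.card = N + 1 := by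
        rw [hT, Finset.card_insert_of_notMem (by rw [Finset.mem_Icc]; omega),
          Nat.card_Icc]
        omega
      have hle : T.card ≤ N := by
        apply unit_pigeon T S' N
        · intro i hi
          obtain ⟨h1, hc⟩ := hmemT i hi
          obtain ⟨hi1, hin⟩ := hTn i h1 hc
          have := (hmem i (Finset.mem_Icc.mpr ⟨hi1, hin⟩)).1
          rw [hlow0 i hi1 hin] at this
          exact this
        · -- the crucial bound: S' i ≤ N - 1
          intro i hi
          obtain ⟨h1, hc⟩ := hmemT i hi
          obtain ⟨hi1, hin⟩ := hTn i h1 hc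
          have hub : S' i + 1 ≤ (((2 * γ) ^ j : ℕ) : ℝ) :=
            le_trans (hmem i (Finset.mem_Icc.mpr ⟨hi1, hin⟩)).2 (hupper j hj1 hjm i hi1 hc)
          by_contra hgt
          push_neg at hgt
          set a := S' i with ha
          have hceil_lo : (N : ℤ) ≤ ⌈a⌉ := by
            have h2 : ((N : ℤ) - 1 : ℤ) < ⌈a⌉ :=
              Int.lt_ceil.mpr (by push_cast; linarith)
            omega
          have hceil_hi : ⌈a⌉ ≤ (((2 * γ) ^ j : ℕ) : ℤ) - 1 := by
            have hub' := hub
            push_cast at hub'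
            exact Int.le_sub_one_of_lt (Int.ceil_lt_iff.mpr (by push_cast; linarith))
          set i' : ℕ := (⌈a⌉).toNat + 1 with hi'
          have hceil0 : (0 : ℤ) ≤ ⌈a⌉ := le_trans (by exact_mod_cast Nat.zero_le N) hceil_lo
          have hi'cast : (i' : ℝ) = (⌈a⌉ : ℝ) + 1 := by
            have h2 : ((⌈a⌉.toNat : ℕ) : ℝ) = ((⌈a⌉ : ℤ) : ℝ) := by
              exact_mod_cast Int.toNat_of_nonneg hceil0
            rw [hi']
            push_cast
            rw [h2]
          have hi'lo : N + 1 ≤ i' := by omega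
          have hi'hi : i' ≤ (2 * γ) ^ j := by omega
          have hmoved : S' i' = S i' := hcon i' (by omega) hi'hi
          have hSi' : S i' = (⌈a⌉ : ℝ) := by rw [hS i', hi'cast]; ring
          have hne' : i ≠ i' := by rcases hc with h | h <;> omega
          have hi'n : i' ≤ n := by omega
          rcases hdisj i i' hi1 (by omega) hin hi'n hne' with h | h
          · rw [hmoved, hSi'] at h
            have := Int.ceil_lt_add_one a
            linarith
          · rw [hmoved, hSi'] at h
            have := Int.le_ceil a
            linarith
        · intro i hi j' hj' hne
          obtain ⟨h1, hc⟩ := hmemT i hi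
          obtain ⟨hi1, hin⟩ := hTn i h1 hc
          obtain ⟨h1', hc'⟩ := hmemT j' hj'
          obtain ⟨hj1', hjn'⟩ := hTn j' h1' hc'
          exact hdisj i j' hi1 hj1' hin hjn' hne
      omega
    -- assemble: an injection from Icc 1 m into the reallocated set
    choose F hF1 hF2 hF3 using fun j (hj : j ∈ Finset.Icc 1 m) =>
      key j (Finset.mem_Icc.mp hj).1 (Finset.mem_Icc.mp hj).2
    have hcard : (Finset.Icc 1 m).card ≤
        ((Finset.Icc 1 (n - 1)).filter (fun i => S' i ≠ S i)).card := by
      apply Finset.card_le_card_of_injOn (fun j => if h : j ∈ Finset.Icc 1 m then F j h else 0)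
      · intro j hj
        rw [Finset.mem_coe] at hj
        simp only [dif_pos hj]
        rw [Finset.mem_coe, Finset.mem_filter, Finset.mem_Icc]
        have h1 := hF1 j hj
        have h2 := hF2 j hj
        have hjm := (Finset.mem_Icc.mp hj).2
        have hNpos : 1 ≤ (2 * γ) ^ (j - 1) := Nat.one_le_pow _ _ (by omega)
        have : (2 * γ) ^ j ≤ (2 * γ) ^ m := Nat.pow_le_pow_right (by omega) hjm
        exact ⟨⟨by omega, by omega⟩, hF3 j hj⟩
      · intro j hj j' hj' heq
        simp only [Finset.mem_coe] at hj hj'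
        simp only [dif_pos hj, dif_pos hj'] at heq
        by_contra hne
        -- wlog j < j'
        have hmono : ∀ (a b : ℕ) (hja : a ∈ Finset.Icc 1 m) (hjb : b ∈ Finset.Icc 1 m),
            a < b → F a hja < F b hjb := by
          intro a b hja hjb hab
          have h2a := hF2 a hja
          have h1b := hF1 b hjb
          have : (2 * γ) ^ a ≤ (2 * γ) ^ (b - 1) := Nat.pow_le_pow_right (by omega) (by omega)
          omega
        rcases Nat.lt_or_ge j j' with h | h
        · exact absurd heq (Nat.ne_of_lt (hmono j j' hj hj' h))
        · exact absurd heq.symm (Nat.ne_of_lt (hmono j' j hj' hj (by omega)))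
    rwa [Nat.card_Icc, Nat.add_sub_cancel] at hcard
end

section
/- Let ε > 0, e ∈ (0, ε], and m = 2/e. Suppose a real s satisfies s < z·(m+2)/(m+1) + 3 where z is a nonnegative real, and s' ≥ z(1+ε). If s ≥ 3 then s' > (s−3)(1+ε/2), and consequently s' − (6/ε + 3) > (s − (6/ε + 3))·(1 + ε/2). -/
/-- Span-growth inequality in the analysis of the Jump subroutine:
    if `s < z(m+2)/(m+1) + 3` (the region lacked enough empty space) and
    `s' ≥ z(1+ε)` (the windows stretch out at rate `1+ε`), with `m = 2/e`
    and `e ≤ ε`, then the span grows: `s' > (s-3)(1+ε/2)`, and consequently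
    `s' - (6/ε+3) > (s - (6/ε+3))(1+ε/2)`. -/
theorem span_growth (ε e m z s s' : ℝ)
    (hε : 0 < ε) (he : 0 < e) (hee : e ≤ ε) (hm : m = 2 / e)
    (hz : 0 ≤ z)
    (hs : s < z * (m + 2) / (m + 1) + 3)
    (hs' : z * (1 + ε) ≤ s')
    (hs3 : 3 ≤ s) :
    s' > (s - 3) * (1 + ε / 2) ∧
    s' - (6 / ε + 3) > (s - (6 / ε + 3)) * (1 + ε / 2) := by
  have hme : m * e = 2 := by rw [hm]; field_simp [he.ne']
  have hm0 : 0 < m := by rw [hm]; positivity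
  have hm1 : 0 < m + 1 := by linarith
  have key : (s - 3) * (m + 1) < z * (m + 2) := by
    have := (lt_div_iff₀ hm1).mp (by linarith : s - 3 < z * (m + 2) / (m + 1))
    linarith
  have h1 : s' > (s - 3) * (1 + ε / 2) := by
    nlinarith [mul_pos he hε, mul_nonneg hz (sub_nonneg.mpr hee),
      mul_nonneg (mul_nonneg hz (sub_nonneg.mpr hee)) he.le,
      mul_pos he he, mul_nonneg (sub_nonneg.mpr hs3) (sub_nonneg.mpr hee)]
  refine ⟨h1, ?_⟩
  have h2 : (6 / ε) * ε = 6 := by field_simp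
  nlinarith [h1]
end

section
/- Let (I, S, r) be a feasible ordered insert state with S ordered, and let L = Leftmost(I). Define N = L if L[r] ≥ S[r−1], and otherwise N = L[1..r−1] · (S[r−1]) · S[r+1..n]. Then N is a near ordered solution for (I, S, r): N is an ordered solution for I and S[r−1] ≤ N[r] ≤ S[r+1] (boundary conventions S[0] = (−∞,−∞), S[n+1] = (∞,∞)). -/
private lemma gap_bound (Z : ℕ → ℝ) (lo : ℝ) :
    ∀ (k : ℕ) (hi : ℝ) (T : Finset ℕ), T.card = k + 1 →
    (∀ a ∈ T, ∀ b ∈ T, a ≠ b → Z a + 1 ≤ Z b ∨ Z b + 1 ≤ Z a) →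
    (∀ t ∈ T, lo ≤ Z t ∧ Z t ≤ hi) →
    lo + (k : ℝ) ≤ hi := by
  intro k
  induction k with
  | zero =>
    intro hi T hcard hpair hbd
    obtain ⟨t, ht⟩ := Finset.card_pos.mp (by omega : 0 < T.card)
    have h := hbd t ht
    push_cast
    linarith [h.1, h.2]
  | succ k ih =>
    intro hi T hcard hpair hbd
    have hne : T.Nonempty := Finset.card_pos.mp (by omega)
    obtain ⟨m, hm, hmax⟩ := Finset.exists_max_image T Z hne
    have hcard' : (T.erase m).card = k + 1 := by
      rw [Finset.card_erase_of_mem hm]; omega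
    have h := ih (Z m - 1) (T.erase m) hcard'
      (fun a ha b hb hab =>
        hpair a (Finset.mem_of_mem_erase ha) b (Finset.mem_of_mem_erase hb) hab)
      (by
        intro t ht
        have htT := Finset.mem_of_mem_erase ht
        have htm : t ≠ m := Finset.ne_of_mem_erase ht
        refine ⟨(hbd t htT).1, ?_⟩
        rcases hpair t htT m hm htm with h1 | h1
        · linarith
        · have := hmax t htT; linarith)
    have hmhi := (hbd m hm).2
    push_cast
    push_cast at h
    linarith

/-- Near's properties.  Tasks `1..n` have unit length and windows `W i`
    (length ≥ 1) nondecreasing in both endpoints.  `S` is an ordered partial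
    solution allocating every task except task `r` (slot starts; slot of task
    `i` is `[S i, S i + 1]`), and the insert state is feasible (some full
    solution exists).  `L` is the Leftmost solution
    (`L 1 = (W 1).1`, `L (i+1) = max ((W (i+1)).1) (L i + 1)`), and `N = L`
    if `L r ≥ S (r-1)` (with the convention `S 0 = -∞`, i.e. always when
    `r = 1`), else `N = L[1..r-1] · (S (r-1)) · S[r+1..n]`.
    Then `N` is a near ordered solution: an ordered solution for `I` with
    `S (r-1) ≤ N r ≤ S (r+1)` (boundary cases vacuous). -/
theorem near_properties (n r : ℕ) (hr1 : 1 ≤ r) (hrn : r ≤ n)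
    (W : ℕ → ℝ × ℝ)
    (hWlen : ∀ i ∈ Finset.Icc 1 n, (W i).1 + 1 ≤ (W i).2)
    (hWord : ∀ i j, 1 ≤ i → i ≤ j → j ≤ n →
      (W i).1 ≤ (W j).1 ∧ (W i).2 ≤ (W j).2)
    (S : ℕ → ℝ)
    (hSmem : ∀ i ∈ Finset.Icc 1 n, i ≠ r → (W i).1 ≤ S i ∧ S i + 1 ≤ (W i).2)
    (hSord : ∀ i j, 1 ≤ i → i < j → j ≤ n → i ≠ r → j ≠ r → S i + 1 ≤ S j)
    (hfeas : ∃ Z : ℕ → ℝ,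
      (∀ i ∈ Finset.Icc 1 n, (W i).1 ≤ Z i ∧ Z i + 1 ≤ (W i).2) ∧
      (∀ i j, 1 ≤ i → i < j → j ≤ n → Z i + 1 ≤ Z j ∨ Z j + 1 ≤ Z i))
    (L : ℕ → ℝ)
    (hL1 : 1 ≤ n → L 1 = (W 1).1)
    (hLrec : ∀ i, 1 ≤ i → i < n → L (i + 1) = max ((W (i + 1)).1) (L i + 1))
    (N : ℕ → ℝ)
    (hN : (r = 1 ∨ S (r - 1) ≤ L r) → ∀ i, N i = L i)
    (hN' : ¬(r = 1 ∨ S (r - 1) ≤ L r) →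
      ∀ i, N i = if i < r then L i else if i = r then S (r - 1) else S i) :
    (∀ i ∈ Finset.Icc 1 n, (W i).1 ≤ N i ∧ N i + 1 ≤ (W i).2) ∧
    (∀ i j, 1 ≤ i → i < j → j ≤ n → N i + 1 ≤ N j) ∧
    (2 ≤ r → S (r - 1) ≤ N r) ∧
    (r + 1 ≤ n → N r ≤ S (r + 1)) := by
  have hn1 : 1 ≤ n := le_trans hr1 hrn
  -- lower bound for Leftmost
  have hLlow : ∀ i, 1 ≤ i → i ≤ n → (W i).1 ≤ L i := by
    intro i hi
    induction i, hi using Nat.le_induction with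
    | base => intro h1n; rw [hL1 h1n]
    | succ i hi ih =>
      intro hin
      rw [hLrec i hi (by omega)]
      exact le_max_left _ _
  -- step and chain
  have hLstep : ∀ i, 1 ≤ i → i < n → L i + 1 ≤ L (i + 1) := by
    intro i hi hin
    rw [hLrec i hi hin]
    exact le_max_right _ _
  have hLchain : ∀ i j, 1 ≤ i → i < j → j ≤ n → L i + 1 ≤ L j := by
    intro i j hi hij
    induction j, hij using Nat.le_induction with
    | base => intro hjn; exact hLstep i hi (by omega)
    | succ j hj ih =>
      intro hjn
      have h1 := hLstep j (by omega) (by omega)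
      have h2 := ih (by omega)
      linarith
  -- representation of L i
  have hLrep : ∀ i, 1 ≤ i → i ≤ n →
      ∃ j, 1 ≤ j ∧ j ≤ i ∧ L i = (W j).1 + ((i - j : ℕ) : ℝ) := by
    intro i hi
    induction i, hi using Nat.le_induction with
    | base => intro h; exact ⟨1, le_refl _, le_refl _, by simp [hL1 h]⟩
    | succ i hi ih =>
      intro hin
      rw [hLrec i hi (by omega)]
      rcases max_cases ((W (i + 1)).1) (L i + 1) with ⟨heq, _⟩ | ⟨heq, _⟩
      · exact ⟨i + 1, by omega, le_refl _, by simp [heq]⟩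
      · obtain ⟨j, hj1, hji, hLj⟩ := ih (by omega)
        refine ⟨j, hj1, by omega, ?_⟩
        rw [heq, hLj]
        have hc : (i + 1 - j : ℕ) = (i - j) + 1 := by omega
        rw [hc]; push_cast; ring
  -- upper bound via feasibility
  have hLup : ∀ i, 1 ≤ i → i ≤ n → L i + 1 ≤ (W i).2 := by
    intro i hi hin
    obtain ⟨j, hj1, hji, hLj⟩ := hLrep i hi hin
    obtain ⟨Z, hZmem, hZdis⟩ := hfeas
    have hcard : (Finset.Icc j i).card = (i - j) + 1 := by
      rw [Nat.card_Icc]; omega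
    have hgb := gap_bound Z ((W j).1) (i - j) ((W i).2 - 1) (Finset.Icc j i) hcard
      (fun a ha b hb hab => by
        simp only [Finset.mem_Icc] at ha hb
        rcases Nat.lt_or_ge a b with h | h
        · exact hZdis a b (by omega) h (by omega)
        · exact (hZdis b a (by omega) (by omega) (by omega)).symm)
      (fun t ht => by
        simp only [Finset.mem_Icc] at ht
        have h1 := hZmem t (Finset.mem_Icc.mpr ⟨by omega, by omega⟩)
        have h2 := hWord j t hj1 ht.1 (by omega)
        have h3 := hWord t i (by omega) ht.2 hin
        exact ⟨by linarith [h1.1, h2.1], by linarith [h1.2, h3.2]⟩)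
    rw [hLj]; linarith
  -- L ≤ S strictly below r
  have hLS : ∀ i, 1 ≤ i → i < r → L i ≤ S i := by
    intro i hi
    induction i, hi using Nat.le_induction with
    | base =>
      intro h1r
      rw [hL1 hn1]
      exact (hSmem 1 (Finset.mem_Icc.mpr ⟨le_refl _, hn1⟩) (by omega)).1
    | succ i hi ih =>
      intro hir
      rw [hLrec i hi (by omega)]
      have h1 := (hSmem (i + 1) (Finset.mem_Icc.mpr ⟨by omega, by omega⟩) (by omega)).1
      have h2 := ih (by omega)
      have h3 := hSord i (i + 1) hi (by omega) (by omega) (by omega) (by omega)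
      exact max_le h1 (by linarith)
  -- L r ≤ S (r+1) when r+1 ≤ n
  have hLrS : r + 1 ≤ n → L r ≤ S (r + 1) := by
    intro hrn1
    have hs1 := (hSmem (r + 1) (Finset.mem_Icc.mpr ⟨by omega, hrn1⟩) (by omega)).1
    rcases Nat.eq_or_lt_of_le hr1 with h | h
    · have hLr : L r = (W r).1 := by rw [← h]; exact hL1 hn1
      have hw := (hWord r (r + 1) hr1 (by omega) hrn1).1
      rw [hLr]; linarith
    · have hrec := hLrec (r - 1) (by omega) (by omega)
      rw [show r - 1 + 1 = r from by omega] at hrec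
      have h1 : (W r).1 ≤ S (r + 1) :=
        le_trans (hWord r (r + 1) hr1 (by omega) hrn1).1 hs1
      have h2 : L (r - 1) ≤ S (r - 1) := hLS (r - 1) (by omega) (by omega)
      have h3 : S (r - 1) + 1 ≤ S (r + 1) :=
        hSord (r - 1) (r + 1) (by omega) (by omega) hrn1 (by omega) (by omega)
      rw [hrec]; exact max_le h1 (by linarith)
  by_cases hc : r = 1 ∨ S (r - 1) ≤ L r
  · have hNL := hN hc
    refine ⟨?_, ?_, ?_, ?_⟩
    · intro i hi
      rw [Finset.mem_Icc] at hi
      rw [hNL i]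
      exact ⟨hLlow i hi.1 hi.2, hLup i hi.1 hi.2⟩
    · intro i j h1 h2 h3
      rw [hNL i, hNL j]
      exact hLchain i j h1 h2 h3
    · intro hr2
      rw [hNL r]
      rcases hc with h | h
      · omega
      · exact h
    · intro h
      rw [hNL r]
      exact hLrS h
  · have hNx := hN' hc
    push_neg at hc
    obtain ⟨hc1, hc2⟩ := hc
    have hc2' : L r < S (r - 1) := hc2
    have hr2 : 2 ≤ r := by omega
    have key : ∀ a, 1 ≤ a → a < r → L a + 1 ≤ S (r - 1) := by
      intro a ha har
      have := hLchain a r ha har hrn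
      linarith
    refine ⟨?_, ?_, ?_, ?_⟩
    · intro i hi
      rw [Finset.mem_Icc] at hi
      rw [hNx i]
      rcases lt_trichotomy i r with h | h | h
      · rw [if_pos h]
        exact ⟨hLlow i hi.1 hi.2, hLup i hi.1 hi.2⟩
      · rw [if_neg (by omega), if_pos h]
        subst h
        have hw1 : (W i).1 ≤ L i := hLlow i hi.1 hi.2
        have hs := hSmem (i - 1) (Finset.mem_Icc.mpr ⟨by omega, by omega⟩) (by omega)
        have hw2 := hWord (i - 1) i (by omega) (by omega) hi.2
        exact ⟨by linarith, by linarith [hs.2, hw2.2]⟩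
      · rw [if_neg (by omega), if_neg (by omega)]
        exact hSmem i (Finset.mem_Icc.mpr hi) (by omega)
    · intro i j h1 h2 h3
      rw [hNx i, hNx j]
      by_cases hjr : j < r
      · rw [if_pos (by omega), if_pos hjr]
        exact hLchain i j h1 h2 (by omega)
      · by_cases hjr' : j = r
        · rw [if_pos (by omega), if_neg hjr, if_pos hjr']
          exact key i h1 (by omega)
        · rw [if_neg hjr, if_neg hjr']
          have hsj : S (r - 1) + 1 ≤ S j :=
            hSord (r - 1) j (by omega) (by omega) h3 (by omega) (by omega)
          by_cases hir : i < r
          · rw [if_pos hir]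
            have := key i h1 hir
            linarith
          · by_cases hir' : i = r
            · rw [if_neg hir, if_pos hir']
              exact hsj
            · rw [if_neg hir, if_neg hir']
              exact hSord i j h1 h2 h3 (by omega) (by omega)
    · intro _
      rw [hNx r, if_neg (lt_irrefl r), if_pos rfl]
    · intro hrn1
      rw [hNx r, if_neg (lt_irrefl r), if_pos rfl]
      have := hSord (r - 1) (r + 1) (by omega) (by omega) hrn1 (by omega) (by omega)
      linarith
end

section
/- Fix an integer p > 1 and let k = ⌊(p+1)/2⌋. Suppose p is odd and I is an instance of unit tasks that is ε-slack on p processors for some ε > 2(p−1)/(p+1). Let J be the single-processor transformed instance where each task has length 1/k and each window keeps its start time but has length reduced by 1 − 1/k. Then J is δ-slack on one processor for δ = (ε(p+1) − 2(p−1))/(2p) > 0. -/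
set_option maxHeartbeats 1600000 in
/-- Multiprocessor reduction.  Let `p > 1` be odd, `k = ⌊(p+1)/2⌋ = (p+1)/2`,
    and let `I` (unit tasks with windows `W i`) be `ε`-slack on `p`
    processors for some `ε > 2(p-1)/(p+1)`: there is an assignment of a
    processor and a slot of length `1+ε` inside each window with
    same-processor slots non-overlapping.  Let `J` be the single-processor
    instance where each task has length `1/k` and each window keeps its start
    but has its length reduced by `1 - 1/k`.  Then `J` is `δ`-slack on one
    processor for `δ = (ε(p+1) - 2(p-1))/(2p) > 0`: there are pairwise
    non-overlapping slots of length `(1/k)(1+δ)`, one inside each shortened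
    window. -/
theorem multiprocessor_reduction (p : ℕ) (hp : 1 < p) (hodd : Odd p)
    (k : ℕ) (hk : k = (p + 1) / 2)
    (ε : ℝ) (hε : ε > 2 * ((p : ℝ) - 1) / ((p : ℝ) + 1))
    (n : ℕ) (W : Fin n → ℝ × ℝ)
    (hslack : ∃ (S : Fin n → ℝ) (proc : Fin n → Fin p),
      (∀ i, (W i).1 ≤ S i ∧ S i + (1 + ε) ≤ (W i).2) ∧
      (∀ i j, i ≠ j → proc i = proc j →
        S i + (1 + ε) ≤ S j ∨ S j + (1 + ε) ≤ S i))
    (δ : ℝ) (hδ : δ = (ε * ((p : ℝ) + 1) - 2 * ((p : ℝ) - 1)) / (2 * (p : ℝ))) :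
    0 < δ ∧
    ∃ S' : Fin n → ℝ,
      (∀ i, (W i).1 ≤ S' i ∧
        S' i + (1 / (k : ℝ)) * (1 + δ) ≤ (W i).2 - (1 - 1 / (k : ℝ))) ∧
      (∀ i j, i ≠ j →
        S' i + (1 / (k : ℝ)) * (1 + δ) ≤ S' j ∨
        S' j + (1 / (k : ℝ)) * (1 + δ) ≤ S' i) := by
  obtain ⟨S, proc, hwin, hdisj⟩ := hslack
  have hpR : (1:ℝ) < (p:ℝ) := by exact_mod_cast hp
  have hk2 : 2 * k = p + 1 := by
    obtain ⟨m, hm⟩ := hodd; omega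
  have hkpos : 0 < k := by omega
  have hkR0 : (0:ℝ) < (k:ℝ) := by exact_mod_cast hkpos
  have hkR : 2 * (k:ℝ) = (p:ℝ) + 1 := by exact_mod_cast hk2
  have hδpos : 0 < δ := by
    rw [hδ]
    apply div_pos _ (by linarith)
    rw [gt_iff_lt, div_lt_iff₀ (by linarith : (0:ℝ) < (p:ℝ)+1)] at hε
    linarith
  set L : ℝ := (1/(k:ℝ)) * (1 + δ) with hLdef
  have hLpos : 0 < L := by
    apply mul_pos (by positivity) (by linarith)
  have hpL : (p:ℝ) * L = ε + 1/(k:ℝ) := by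
    have hp0 : (p:ℝ) ≠ 0 := by linarith
    have hk0 : (k:ℝ) ≠ 0 := ne_of_gt hkR0
    rw [hLdef, hδ]
    field_simp
    linear_combination (-ε) * hkR
  have hpL1 : (p:ℝ) * L ≤ 1 + ε := by
    have h1 : 1/(k:ℝ) ≤ 1 := by
      rw [div_le_one hkR0]; exact_mod_cast hkpos
    linarith [hpL]
  clear_value L
  refine ⟨hδpos, ?_⟩
  rcases Nat.eq_zero_or_pos n with hn | hn
  · subst hn
    exact ⟨fun i => 0, fun i => i.elim0, fun i j _ => i.elim0⟩
  -- sort the tasks by slot start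
  obtain ⟨σ, hmono⟩ : ∃ σ : Equiv.Perm (Fin n), Monotone (S ∘ σ) :=
    ⟨Tuple.sort S, Tuple.monotone_sort S⟩
  have hA' : ∀ r (h : r < n), S (σ ⟨min r (n-1), by omega⟩) = S (σ ⟨r, h⟩) := by
    intro r h
    congr 2
    exact Fin.ext (by simp; omega)
  set A : ℕ → ℝ := fun r => S (σ ⟨min r (n-1), by omega⟩) with hA
  have hAeq : ∀ r (h : r < n), A r = S (σ ⟨r, h⟩) := fun r h => hA' r h
  have hAmono : ∀ r s, s < n → r ≤ s → A r ≤ A s := by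
    intro r s hs hrs
    rw [hAeq r (lt_of_le_of_lt hrs hs), hAeq s hs]
    exact hmono (Fin.mk_le_mk.mpr hrs)
  clear hA'
  clear_value A
  -- the depth-p property: sorted starts p apart differ by at least 1+ε
  have hstep : ∀ r, r + p < n → A r + (1 + ε) ≤ A (r + p) := by
    intro r hr
    by_contra hcon
    push_neg at hcon
    obtain ⟨a, b, hab, hg⟩ := Fintype.exists_ne_map_eq_of_card_lt
      (fun t : Fin (p+1) => proc (σ ⟨r + (t:ℕ), by omega⟩))
      (by simp)
    have hbnd : ∀ t : Fin (p+1),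
        A r ≤ S (σ ⟨r + (t:ℕ), by omega⟩) ∧ S (σ ⟨r + (t:ℕ), by omega⟩) ≤ A (r + p) := by
      intro t
      have ht : (t:ℕ) < p + 1 := t.isLt
      constructor
      · rw [hAeq r (by omega)]
        exact hmono (Fin.mk_le_mk.mpr (by omega))
      · rw [hAeq (r+p) (by omega)]
        exact hmono (Fin.mk_le_mk.mpr (by omega))
    have hne : σ ⟨r + (a:ℕ), by omega⟩ ≠ σ ⟨r + (b:ℕ), by omega⟩ := by
      intro h
      apply hab
      have h2 := σ.injective h
      have h3 : r + (a:ℕ) = r + (b:ℕ) := by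
        simpa [Fin.mk.injEq] using h2
      exact Fin.ext (by omega)
    have hd := hdisj _ _ hne hg
    obtain ⟨ha1, ha2⟩ := hbnd a
    obtain ⟨hb1, hb2⟩ := hbnd b
    rcases hd with h | h <;> linarith
  -- greedy packing
  let T : ℕ → ℝ := fun r => Nat.rec (A 0) (fun r Tr => max (A (r+1)) (Tr + L)) r
  have hT0 : T 0 = A 0 := rfl
  have hTs : ∀ r, T (r+1) = max (A (r+1)) (T r + L) := fun r => rfl
  have hAT : ∀ r, A r ≤ T r := by
    intro r
    cases r with
    | zero => exact le_of_eq hT0.symm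
    | succ r => rw [hTs]; exact le_max_left _ _
  have hTstep : ∀ r, T r + L ≤ T (r+1) := fun r => by
    rw [hTs]; exact le_max_right _ _
  clear_value T
  have hTmono : ∀ r s, r < s → T r + L ≤ T s := by
    intro r s hrs
    induction s with
    | zero => omega
    | succ s ih =>
      rcases Nat.lt_succ_iff_lt_or_eq.mp hrs with h | h
      · have := ih h
        have := hTstep s
        linarith
      · subst h; exact hTstep r
  -- the invariant: greedy stays within (p-1)L of the sorted start
  have hinv : ∀ r, r < n → ∃ j, j ≤ r ∧ j + 1 ≤ p ∧ T r ≤ A (r - j) + (j:ℝ) * L := by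
    intro r
    induction r with
    | zero =>
      intro _
      exact ⟨0, le_refl 0, by omega, by simp [hT0]⟩
    | succ r ih =>
      intro hr
      obtain ⟨j, hjr, hjp, hTle⟩ := ih (by omega)
      by_cases hc : T r + L ≤ A (r+1)
      · refine ⟨0, by omega, by omega, ?_⟩
        rw [hTs]
        simpa using max_le le_rfl hc
      · push_neg at hc
        have hT1 : T (r+1) ≤ T r + L := by
          rw [hTs]
          exact max_le hc.le le_rfl
        by_cases hjp' : j + 2 ≤ p
        · refine ⟨j + 1, by omega, by omega, ?_⟩
          have hsub : r + 1 - (j + 1) = r - j := by omega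
          rw [hsub]
          push_cast
          linarith
        · -- j + 1 = p: use the depth property
          have hjeq : j + 1 = p := by omega
          have hsub : r - j + p = r + 1 := by omega
          have hst := hstep (r - j) (by omega)
          rw [hsub] at hst
          refine ⟨0, by omega, by omega, ?_⟩
          have hjL : (j:ℝ) * L + L = (p:ℝ) * L := by
            have h5 : ((j:ℕ):ℝ) + 1 = (p:ℝ) := by exact_mod_cast hjeq
            linear_combination L * h5
          simp only [Nat.sub_zero, Nat.cast_zero, zero_mul, add_zero]
          linarith
  -- assemble the solution
  refine ⟨fun i => T ((σ.symm i : Fin n) : ℕ), ?_, ?_⟩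
  · intro i
    have hrn : ((σ.symm i : Fin n) : ℕ) < n := (σ.symm i).isLt
    have hSi : A ((σ.symm i : Fin n) : ℕ) = S i := by
      rw [hAeq _ hrn]
      congr 1
      have : (⟨((σ.symm i : Fin n) : ℕ), hrn⟩ : Fin n) = σ.symm i := Fin.ext rfl
      rw [this]
      exact σ.apply_symm_apply i
    obtain ⟨j, hjr, hjp, hTle⟩ := hinv _ hrn
    have h1 : A (((σ.symm i : Fin n) : ℕ) - j) ≤ A ((σ.symm i : Fin n) : ℕ) :=
      hAmono _ _ hrn (by omega)
    have h2 : (j:ℝ) ≤ (p:ℝ) - 1 := by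
      have : ((j:ℕ):ℝ) + 1 ≤ (p:ℝ) := by exact_mod_cast hjp
      linarith
    have hw := hwin i
    have hjL : (j:ℝ) * L ≤ ((p:ℝ) - 1) * L :=
      mul_le_mul_of_nonneg_right h2 hLpos.le
    have hpLsplit : ((p:ℝ) - 1) * L + L = (p:ℝ) * L := by ring
    constructor
    · calc (W i).1 ≤ S i := hw.1
        _ = A _ := hSi.symm
        _ ≤ T _ := hAT _
    · have hTr : T ((σ.symm i : Fin n) : ℕ) ≤ S i + ((p:ℝ) - 1) * L := by
        rw [← hSi]
        linarith
      have := hw.2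
      linarith [hpL]
  · intro i j hij
    have hne : ((σ.symm i : Fin n) : ℕ) ≠ ((σ.symm j : Fin n) : ℕ) := by
      intro h
      apply hij
      have h2 : σ.symm i = σ.symm j := Fin.ext h
      have := congrArg σ h2
      simpa using this
    rcases lt_or_gt_of_ne hne with h | h
    · left; exact hTmono _ _ h
    · right; exact hTmono _ _ h
end
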